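/- Let P be a directed family of sequences p with p_i ≥ 1, and A(P) the Köthe algebra λ(P) with multiplication e_i e_j = e_{min(i,j)}. If there exists a strictly increasing sequence (n_k) of indices such that (p_{n_k})_k is bounded for every p ∈ P, then A(P) has a bounded approximate identity (namely a subnet of (e_{n_k})). -/

import Mathlib

/-!
Take `u k = e_{s k}`, whose `p`-norm is `p (s k)`. For `a ∈ λ(P)` and its truncation
`aₙ = ∑_{i < n} aᵢ eᵢ` we have `aₙ eₙ = aₙ`, so `a - a eₙ = (a - aₙ) - (a - aₙ) eₙ` and
submultiplicativity gives `‖a - a eₙ‖_p ≤ (1 + p n) ‖a - aₙ‖_p`. Along `n = s k` the factor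
`1 + p (s k)` stays bounded while `‖a - aₙ‖_p`, a tail of a convergent series, tends to `0`.
-/

/-- The Köthe sequence space `λ(P)` as a subspace of `ℕ → ℂ`. -/
noncomputable def kothe (P : Set (ℕ → ℝ)) (hP : ∀ p ∈ P, ∀ i, (1 : ℝ) ≤ p i) :
    Submodule ℂ (ℕ → ℂ) where
  carrier := {a | ∀ p ∈ P, Summable fun i => ‖a i‖ * p i}
  zero_mem' := by intro p hp; simpa using summable_zero
  add_mem' := by
    intro a b ha hb p hp
    refine Summable.of_nonneg_of_le
      (fun i => mul_nonneg (norm_nonneg _)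
        (le_trans zero_le_one (hP p hp i))) (fun i => ?_) ((ha p hp).add (hb p hp))
    have := mul_le_mul_of_nonneg_right (norm_add_le ((a : ℕ → ℂ) i) (b i))
      (le_trans zero_le_one (hP p hp i))
    simpa [add_mul] using this
  smul_mem' := by
    intro c a ha p hp
    have := (ha p hp).mul_left ‖c‖
    refine this.congr fun i => ?_
    simp [norm_smul, mul_assoc]

/-- The `i`-th standard unit vector as an element of `λ(P)`. -/
noncomputable def kotheE (P : Set (ℕ → ℝ)) (hP : ∀ p ∈ P, ∀ i, (1 : ℝ) ≤ p i)
    (i : ℕ) : kothe P hP :=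
  ⟨Pi.single i 1, by
    intro p hp
    refine summable_of_ne_finset_zero (s := {i}) fun j hj => ?_
    rw [Pi.single_eq_of_ne (by simpa using hj)]
    simp⟩

/-- The seminorm `‖a‖_p = ∑ᵢ |aᵢ| pᵢ` (as a real-valued expression). -/
noncomputable def kNorm (p : ℕ → ℝ) (a : ℕ → ℂ) : ℝ := ∑' i, ‖a i‖ * p i

open Filter

lemma kNorm_nonneg {p : ℕ → ℝ} (hp : 0 ≤ p) (a : ℕ → ℂ) : 0 ≤ kNorm p a :=
  tsum_nonneg fun i => mul_nonneg (norm_nonneg _) (hp i)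

lemma kNorm_single (p : ℕ → ℝ) (i : ℕ) : kNorm p (Pi.single i 1) = p i := by
  rw [kNorm, tsum_eq_single i fun j hj => by simp [Pi.single_eq_of_ne hj]]
  simp

section Kothe

variable {P : Set (ℕ → ℝ)} {hP : ∀ p ∈ P, ∀ i, (1 : ℝ) ≤ p i}

lemma kNorm_kotheE (p : ℕ → ℝ) (i : ℕ) : kNorm p (kotheE P hP i : ℕ → ℂ) = p i :=
  kNorm_single p i

lemma kNorm_sub_le {p : ℕ → ℝ} (hp : p ∈ P) (a b : kothe P hP) :
    kNorm p ((a - b : kothe P hP) : ℕ → ℂ)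
      ≤ kNorm p (a : ℕ → ℂ) + kNorm p (b : ℕ → ℂ) := by
  rw [kNorm, kNorm, kNorm, ← (a.2 p hp).tsum_add (b.2 p hp)]
  refine Summable.tsum_le_tsum (fun i => ?_) ((a - b).2 p hp) ((a.2 p hp).add (b.2 p hp))
  rw [← add_mul]
  exact mul_le_mul_of_nonneg_right (norm_sub_le _ _) (zero_le_one.trans (hP p hp i))

noncomputable def kotheTrunc (a : kothe P hP) (n : ℕ) : kothe P hP :=
  ∑ i ∈ Finset.range n, (a : ℕ → ℂ) i • kotheE P hP i

lemma coe_sub_kotheTrunc_apply (a : kothe P hP) (n j : ℕ) :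
    ((a - kotheTrunc a n : kothe P hP) : ℕ → ℂ) j =
      if j < n then 0 else (a : ℕ → ℂ) j := by
  have htrunc : ((kotheTrunc a n : kothe P hP) : ℕ → ℂ) j =
      if j < n then (a : ℕ → ℂ) j else 0 := by
    simp [kotheTrunc, kotheE, Pi.single_apply]
  rw [Submodule.coe_sub, Pi.sub_apply, htrunc]
  split_ifs <;> simp

lemma kNorm_sub_kotheTrunc {p : ℕ → ℝ} (hp : p ∈ P) (a : kothe P hP) (n : ℕ) :
    kNorm p ((a - kotheTrunc a n : kothe P hP) : ℕ → ℂ) =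
      ∑' i, ‖(a : ℕ → ℂ) (i + n)‖ * p (i + n) := by
  rw [kNorm, ← ((a - kotheTrunc a n).2 p hp).sum_add_tsum_nat_add n, Finset.sum_eq_zero
    fun i hi => by simp [coe_sub_kotheTrunc_apply, Finset.mem_range.mp hi], zero_add]
  simp [coe_sub_kotheTrunc_apply]

lemma tendsto_kNorm_sub_kotheTrunc {p : ℕ → ℝ} (hp : p ∈ P) (a : kothe P hP) :
    Tendsto (fun n => kNorm p ((a - kotheTrunc a n : kothe P hP) : ℕ → ℂ)) atTop (nhds 0) := by
  simpa only [kNorm_sub_kotheTrunc hp] using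
    tendsto_sum_nat_add fun i => ‖(a : ℕ → ℂ) i‖ * p i

variable {M : kothe P hP →ₗ[ℂ] kothe P hP →ₗ[ℂ] kothe P hP}

lemma kotheTrunc_mul_kotheE
    (hMe : ∀ i j : ℕ, M (kotheE P hP i) (kotheE P hP j) = kotheE P hP (min i j))
    (a : kothe P hP) (n : ℕ) : M (kotheTrunc a n) (kotheE P hP n) = kotheTrunc a n := by
  simp only [kotheTrunc, map_sum, map_smul, LinearMap.coe_sum, Finset.sum_apply,
    LinearMap.smul_apply, hMe]
  exact Finset.sum_congr rfl fun i hi => by rw [min_eq_left (Finset.mem_range.mp hi).le]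

lemma kNorm_sub_mul_kotheE_le
    (hMe : ∀ i j : ℕ, M (kotheE P hP i) (kotheE P hP j) = kotheE P hP (min i j))
    {p : ℕ → ℝ} (hp : p ∈ P)
    (hMsub : ∀ a b : kothe P hP,
      kNorm p (M a b : ℕ → ℂ) ≤ kNorm p (a : ℕ → ℂ) * kNorm p (b : ℕ → ℂ))
    (a : kothe P hP) (n : ℕ) :
    kNorm p ((a - M a (kotheE P hP n) : kothe P hP) : ℕ → ℂ)
      ≤ (1 + p n) * kNorm p ((a - kotheTrunc a n : kothe P hP) : ℕ → ℂ) := by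
  set r := a - kotheTrunc a n with hr
  have hsplit : a - M a (kotheE P hP n) = r - M r (kotheE P hP n) := by
    rw [hr, map_sub, LinearMap.sub_apply, kotheTrunc_mul_kotheE hMe]
    abel
  calc kNorm p ((a - M a (kotheE P hP n) : kothe P hP) : ℕ → ℂ)
      ≤ kNorm p (r : ℕ → ℂ) + kNorm p (M r (kotheE P hP n) : ℕ → ℂ) :=
        hsplit ▸ kNorm_sub_le hp _ _
    _ ≤ kNorm p (r : ℕ → ℂ) + kNorm p (r : ℕ → ℂ) * p n := by
        grw [hMsub, kNorm_kotheE]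
    _ = (1 + p n) * kNorm p (r : ℕ → ℂ) := by ring

end Kothe

theorem stmt13_general (P : Set (ℕ → ℝ)) (hP : ∀ p ∈ P, ∀ i, (1 : ℝ) ≤ p i)
    (M : kothe P hP →ₗ[ℂ] kothe P hP →ₗ[ℂ] kothe P hP)
    (hMe : ∀ i j : ℕ, M (kotheE P hP i) (kotheE P hP j) = kotheE P hP (min i j))
    (hMsub : ∀ p ∈ P, ∀ a b : kothe P hP,
      kNorm p (M a b : ℕ → ℂ) ≤ kNorm p (a : ℕ → ℂ) * kNorm p (b : ℕ → ℂ))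
    (s : ℕ → ℕ) (hs : StrictMono s)
    (hbdd : ∀ p ∈ P, ∃ C : ℝ, ∀ k, p (s k) ≤ C) :
    ∃ (ι : Type) (pr : Preorder ι),
      (∀ x y : ι, ∃ z, pr.le x z ∧ pr.le y z) ∧ Nonempty ι ∧
      ∃ u : ι → kothe P hP,
        (∀ p ∈ P, ∃ C : ℝ, ∀ i, kNorm p (u i : ℕ → ℂ) ≤ C) ∧
        ∀ a : kothe P hP, ∀ p ∈ P,
          Tendsto (fun i => kNorm p ((a - M a (u i) : kothe P hP) : ℕ → ℂ))
            (@Filter.atTop ι pr) (nhds 0) := by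
  refine ⟨ℕ, inferInstance, fun x y => ⟨max x y, le_max_left _ _, le_max_right _ _⟩,
    ⟨0⟩, fun k => kotheE P hP (s k), fun p hp => ?_, fun a p hp => ?_⟩
  · obtain ⟨C, hC⟩ := hbdd p hp
    exact ⟨C, fun k => (kNorm_kotheE p (s k)).trans_le (hC k)⟩
  · obtain ⟨C, hC⟩ := hbdd p hp
    have hp0 : 0 ≤ p := fun i => zero_le_one.trans (hP p hp i)
    have htail : Tendsto
        (fun k => (1 + C) * kNorm p ((a - kotheTrunc a (s k) : kothe P hP) : ℕ → ℂ))
        atTop (nhds 0) := by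
      simpa using ((tendsto_kNorm_sub_kotheTrunc hp a).comp hs.tendsto_atTop).const_mul (1 + C)
    refine squeeze_zero (fun k => kNorm_nonneg hp0 _) (fun k => ?_) htail
    grw [kNorm_sub_mul_kotheE_le hMe hp (hMsub p hp), hC k]
    exact kNorm_nonneg hp0 _

/-- If there is a strictly increasing sequence `(n_k)` with `(p_{n_k})_k` bounded for
every `p ∈ P`, then the Köthe algebra `A(P)` has a bounded approximate identity. -/
theorem stmt13 (P : Set (ℕ → ℝ)) (hP : ∀ p ∈ P, ∀ i, (1 : ℝ) ≤ p i)
    (hdir : ∀ p ∈ P, ∀ q ∈ P, ∃ r ∈ P, ∀ i, max (p i) (q i) ≤ r i)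
    (M : kothe P hP →ₗ[ℂ] kothe P hP →ₗ[ℂ] kothe P hP)
    (hMe : ∀ i j : ℕ, M (kotheE P hP i) (kotheE P hP j) = kotheE P hP (min i j))
    (hMsub : ∀ p ∈ P, ∀ a b : kothe P hP,
      kNorm p (M a b : ℕ → ℂ) ≤ kNorm p (a : ℕ → ℂ) * kNorm p (b : ℕ → ℂ))
    (s : ℕ → ℕ) (hs : StrictMono s)
    (hbdd : ∀ p ∈ P, ∃ C : ℝ, ∀ k, p (s k) ≤ C) :
    ∃ (ι : Type) (pr : Preorder ι),
      (∀ x y : ι, ∃ z, pr.le x z ∧ pr.le y z) ∧ Nonempty ι ∧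
      ∃ u : ι → kothe P hP,
        (∀ p ∈ P, ∃ C : ℝ, ∀ i, kNorm p (u i : ℕ → ℂ) ≤ C) ∧
        ∀ a : kothe P hP, ∀ p ∈ P,
          Tendsto (fun i => kNorm p ((a - M a (u i) : kothe P hP) : ℕ → ℂ))
            (@Filter.atTop ι pr) (nhds 0) :=
  stmt13_general P hP M hMe hMsub s hs hbdd
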